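/- Let k ≥ 1 be a natural number, κ ≥ 1, λ₂ > 0 with λ₂ κ² > 1, and let σ, β : Fin k → ℝ be positive with σ nonincreasing, σ(0) = 1, σ(k−1) = 1/κ, β nondecreasing, j ↦ σ_j² β_j nonincreasing, and ∑_{j<k} β_j² = 1. Set κ' = β(k−1)/β(0). Then for every j, (σ_j β_j)² / ((σ_j β_j)² + λ₂) ≥ (β(0) β(k−1)) / (β(k−1)² + λ₂ κ²) > 1/(2 λ₂ k κ² κ'). -/
import Mathlib


/-- Estimate of Appendix B of the paper for the rotation constant `ρ` of the DYXL
algorithm: for every `j`,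
`(σ_j β_j)²/((σ_j β_j)² + λ₂) ≥ β(0)β(k−1)/(β(k−1)² + λ₂κ²) > 1/(2λ₂kκ²κ')`,
where `κ' = β(k−1)/β(0)`. -/
theorem dyxl_rho_bound
    (k : ℕ) (hk : 1 ≤ k) (κ lam2 : ℝ)
    (hκ : 1 ≤ κ) (hlam2 : 0 < lam2) (hlκ : 1 < lam2 * κ ^ 2)
    (σ β : Fin k → ℝ)
    (hσpos : ∀ j, 0 < σ j) (hβpos : ∀ j, 0 < β j)
    (hσanti : Antitone σ)
    (hσ0 : σ ⟨0, by omega⟩ = 1) (hσlast : σ ⟨k - 1, by omega⟩ = 1 / κ)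
    (hβmono : Monotone β)
    (hanti : Antitone (fun j => σ j ^ 2 * β j))
    (hsum : ∑ j, β j ^ 2 = 1) :
    ∀ j : Fin k,
      (σ j * β j) ^ 2 / ((σ j * β j) ^ 2 + lam2)
          ≥ (β ⟨0, by omega⟩ * β ⟨k - 1, by omega⟩)
              / ((β ⟨k - 1, by omega⟩) ^ 2 + lam2 * κ ^ 2) ∧
      (β ⟨0, by omega⟩ * β ⟨k - 1, by omega⟩)
          / ((β ⟨k - 1, by omega⟩) ^ 2 + lam2 * κ ^ 2)
        > 1 / (2 * lam2 * k * κ ^ 2 * (β ⟨k - 1, by omega⟩ / β ⟨0, by omega⟩)) := by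
  intro j
  set z : Fin k := ⟨0, by omega⟩
  set l : Fin k := ⟨k - 1, by omega⟩
  have hκ0 : (0:ℝ) < κ := lt_of_lt_of_le one_pos hκ
  have hb0 : 0 < β z := hβpos z
  have hbl : 0 < β l := hβpos l
  have hb0l : β z ≤ β l := hβmono (by simp [z, l, Fin.le_def])
  have hjl : j ≤ l := by
    have := j.2; simp [l, Fin.le_def]; omega
  have hzj : z ≤ j := by simp [z, Fin.le_def]
  -- σ j ^ 2 * β j ≥ β l / κ ^ 2
  have h1 : β l / κ ^ 2 ≤ σ j ^ 2 * β j := by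
    have := hanti hjl
    simpa [hσlast, div_pow, one_pow, div_mul_eq_mul_div, one_mul, div_eq_inv_mul] using this
  have h2 : β z ≤ β j := hβmono hzj
  have hσj : 0 < σ j := hσpos j
  have hbj : 0 < β j := hβpos j
  have hX : 0 < (σ j * β j) ^ 2 := by positivity
  -- key: (σ j * β j)^2 * κ^2 ≥ β z * β l
  have hkey : β z * β l ≤ (σ j * β j) ^ 2 * κ ^ 2 := by
    have : β l / κ ^ 2 * β z ≤ (σ j ^ 2 * β j) * β j := by
      apply mul_le_mul h1 h2 hb0.le (by positivity)
    calc β z * β l = (β l / κ ^ 2 * β z) * κ ^ 2 := by field_simp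
      _ ≤ (σ j ^ 2 * β j * β j) * κ ^ 2 := by
          exact mul_le_mul_of_nonneg_right this (by positivity)
      _ = (σ j * β j) ^ 2 * κ ^ 2 := by ring
  have hden1 : 0 < (σ j * β j) ^ 2 + lam2 := by positivity
  have hden2 : 0 < (β l) ^ 2 + lam2 * κ ^ 2 := by positivity
  constructor
  · rw [ge_iff_le, div_le_div_iff₀ hden2 hden1]
    nlinarith [mul_le_mul_of_nonneg_right hkey hlam2.le,
      mul_le_mul_of_nonneg_right (mul_le_mul_of_nonneg_right hb0l hbl.le) hX.le,
      sq_nonneg κ, hX]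
  · -- k * β l ^ 2 ≥ 1 and β l ^ 2 ≤ 1
    have hble : (β l) ^ 2 ≤ 1 := by
      rw [← hsum]
      exact Finset.single_le_sum (f := fun i => β i ^ 2)
        (fun i _ => by positivity) (Finset.mem_univ l)
    have hkb : (1:ℝ) ≤ (k:ℝ) * (β l) ^ 2 := by
      have : ∑ i, β i ^ 2 ≤ ∑ _i : Fin k, (β l) ^ 2 := by
        apply Finset.sum_le_sum
        intro i _
        have := hβmono (show i ≤ l by
          have := i.2; simp [l, Fin.le_def]; omega)
        nlinarith [hβpos i]
      rw [hsum] at this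
      simpa [Finset.sum_const, Finset.card_univ, nsmul_eq_mul] using this
    have hkpos : (0:ℝ) < (k:ℝ) := by exact_mod_cast hk
    have hden3 : 0 < 2 * lam2 * k * κ ^ 2 * (β l / β z) := by positivity
    rw [gt_iff_lt, div_lt_div_iff₀ hden3 hden2]
    have hrw : β z * β l * (2 * lam2 * ↑k * κ ^ 2 * (β l / β z))
        = 2 * lam2 * ↑k * κ ^ 2 * (β l) ^ 2 := by
      field_simp
    rw [hrw]
    nlinarith [mul_le_mul_of_nonneg_left hkb (by positivity : (0:ℝ) ≤ 2 * lam2 * κ ^ 2)]
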